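/- Let the bond-price model for currency k0 be risk neutral, i.e. the processes B^{k0,k0}(·,T)/B^{c,k0} are (ℚ^{k0},𝔾)-martingales for every T. Then for k3 ≠ k0, the processes B^{k0,k3}(·,T)/B^{c,k0,k3} are (ℚ^{k0},𝔾)-martingales for every T if and only if the processes Q^{k0,k3}(·,T)/Q^{k0,k3}_· are (ℚ^{T,k0,k0},𝔾)-martingales for every T, where ℚ^{T,k0,k0} is the forward measure with density process (B^{k0,k0}(t,T)/B^{c,k0}_t)·(B^{c,k0}_0/B^{k0,k0}(0,T)). -/

import Mathlib

/-!
Bayes' formula turns conditional expectations under the forward measure, whose density is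
`Z_T / Z_0` for the deflated bond price `Z_t = B^{k0,k0}(t,T) / B^{c,k0}_t`, into conditional
expectations under `ℚ^{k0}`: since `Z` is a `ℚ^{k0}`-martingale, the density process is
`Z_t / Z_0`, and `X` is a forward martingale iff `X Z` is a `ℚ^{k0}`-martingale. For the
spread `X_t = Q^{k0,k3}(t,T) / Q^{k0,k3}_t` the product `X Z` is `B^{k0,k3}(·,T) / B^{c,k0,k3}`.
The only subtle point is that `Z_T / Z_0` is integrable although `Z_0⁻¹` need not be bounded;
this is checked on lower integrals, where pulling out `Z_0⁻¹` needs no integrability.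
-/

open MeasureTheory

/-- The measure with density `g` with respect to `μ` (used to define forward measures). -/
noncomputable def densMeasure {Ω : Type*} {m0 : MeasurableSpace Ω}
    (μ : Measure Ω) (g : Ω → ℝ) : Measure Ω :=
  μ.withDensity fun ω => ENNReal.ofReal (g ω)

open Filter
open scoped ENNReal

section

variable {Ω : Type*} {m m0 : MeasurableSpace Ω} {μ : Measure Ω}

theorem integrable_of_condExp_ae_eq_pos [NeZero μ] {f g : Ω → ℝ} (h : μ[f|m] =ᵐ[μ] g)
    (hg : ∀ ω, 0 < g ω) : Integrable f μ := by
  by_contra hf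
  rw [condExp_of_not_integrable hf] at h
  obtain ⟨ω, hω⟩ := h.exists
  exact (hg ω).ne hω

theorem condExp_ae_eq_iff_forall_setIntegral_eq (hm : m ≤ m0) [SigmaFinite (μ.trim hm)]
    {f g : Ω → ℝ} (hf : Integrable f μ) (hg : Integrable g μ) (hgm : StronglyMeasurable[m] g) :
    μ[f|m] =ᵐ[μ] g ↔ ∀ s, MeasurableSet[m] s → ∫ ω in s, f ω ∂μ = ∫ ω in s, g ω ∂μ := by
  refine ⟨fun h s hs => ?_, fun h => ?_⟩
  · rw [← setIntegral_condExp hm hf hs]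
    exact integral_congr_ae (ae_restrict_of_ae h)
  · exact (ae_eq_condExp_of_forall_setIntegral_eq hm hf (fun s _ _ => hg.integrableOn)
      (fun s hs _ => (h s hs).symm) hgm.aestronglyMeasurable).symm

theorem condExp_div_of_measurable {f g : Ω → ℝ} (hg : Measurable[m] g) (hf : Integrable f μ)
    (hfg : Integrable (f / g) μ) : μ[f / g|m] =ᵐ[μ] μ[f|m] / g := by
  simpa only [div_eq_mul_inv] using
    condExp_mul_of_stronglyMeasurable_right hg.inv.stronglyMeasurable
      (by simpa only [div_eq_mul_inv] using hfg) hf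

theorem lintegral_ofReal_condExp_mul (hm : m ≤ m0) [SigmaFinite (μ.trim hm)] {f : Ω → ℝ}
    (hf : Integrable f μ) (hf0 : 0 ≤ᵐ[μ] f) {g : Ω → ℝ≥0∞} (hg : Measurable[m] g) :
    ∫⁻ ω, ENNReal.ofReal (μ[f|m] ω) * g ω ∂μ = ∫⁻ ω, ENNReal.ofReal (f ω) * g ω ∂μ := by
  have htrim : (μ.withDensity fun ω => ENNReal.ofReal (μ[f|m] ω)).trim hm
      = (μ.withDensity fun ω => ENNReal.ofReal (f ω)).trim hm := by
    refine @Measure.ext _ m _ _ fun s hs => ?_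
    rw [trim_measurableSet_eq hm hs, trim_measurableSet_eq hm hs,
      withDensity_apply _ (hm s hs), withDensity_apply _ (hm s hs),
      ← ofReal_integral_eq_lintegral_ofReal integrable_condExp.integrableOn
        (ae_restrict_of_ae (condExp_nonneg hf0)),
      ← ofReal_integral_eq_lintegral_ofReal hf.integrableOn (ae_restrict_of_ae hf0),
      setIntegral_condExp hm hf hs]
  have hgm : Measurable g := hg.mono hm le_rfl
  calc ∫⁻ ω, ENNReal.ofReal (μ[f|m] ω) * g ω ∂μ
      = ∫⁻ ω, g ω ∂(μ.withDensity fun ω => ENNReal.ofReal (μ[f|m] ω)).trim hm := by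
        rw [lintegral_trim hm hg, lintegral_withDensity_eq_lintegral_mul₀
          integrable_condExp.aemeasurable.ennreal_ofReal hgm.aemeasurable]
        rfl
    _ = ∫⁻ ω, ENNReal.ofReal (f ω) * g ω ∂μ := by
        rw [htrim, lintegral_trim hm hg, lintegral_withDensity_eq_lintegral_mul₀
          hf.aemeasurable.ennreal_ofReal hgm.aemeasurable]
        rfl

theorem integrable_div_of_condExp_ae_eq [IsFiniteMeasure μ] (hm : m ≤ m0) {f w : Ω → ℝ}
    (hf : Integrable f μ) (hf0 : ∀ ω, 0 ≤ f ω) (hw : Measurable[m] w) (hw0 : ∀ ω, 0 < w ω)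
    (hfw : μ[f|m] =ᵐ[μ] w) : Integrable (f / w) μ := by
  refine ⟨(hf.aemeasurable.div (hw.mono hm le_rfl).aemeasurable).aestronglyMeasurable, ?_⟩
  refine (hasFiniteIntegral_iff_ofReal
    (ae_of_all _ fun ω => div_nonneg (hf0 ω) (hw0 ω).le : 0 ≤ᵐ[μ] f / w)).2 ?_
  calc ∫⁻ ω, ENNReal.ofReal ((f / w) ω) ∂μ
      = ∫⁻ ω, ENNReal.ofReal (f ω) * ENNReal.ofReal (w ω)⁻¹ ∂μ := by
        simp only [Pi.div_apply, div_eq_mul_inv, ENNReal.ofReal_mul (hf0 _)]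
    _ = ∫⁻ ω, ENNReal.ofReal (w ω) * ENNReal.ofReal (w ω)⁻¹ ∂μ := by
        rw [← lintegral_ofReal_condExp_mul hm hf (ae_of_all _ hf0)
          (g := fun ω => ENNReal.ofReal (w ω)⁻¹) hw.inv.ennreal_ofReal]
        exact lintegral_congr_ae (hfw.mono fun ω h => by simp only [h])
    _ = μ Set.univ := by
        rw [← setLIntegral_one, Measure.restrict_univ]
        refine lintegral_congr fun ω => ?_
        rw [← ENNReal.ofReal_mul (hw0 ω).le, mul_inv_cancel₀ (hw0 ω).ne', ENNReal.ofReal_one]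
    _ < ∞ := measure_lt_top μ _

section densMeasure

variable {D : Ω → ℝ}

theorem setIntegral_densMeasure (hDm : Measurable D) (hD0 : ∀ ω, 0 ≤ D ω) (f : Ω → ℝ)
    {s : Set Ω} (hs : MeasurableSet s) :
    ∫ ω in s, f ω ∂densMeasure μ D = ∫ ω in s, f ω * D ω ∂μ := by
  rw [densMeasure, setIntegral_withDensity_eq_setIntegral_toReal_smul hDm.ennreal_ofReal
    (ae_of_all _ fun _ => ENNReal.ofReal_lt_top) f hs]
  simp only [ENNReal.toReal_ofReal (hD0 _), smul_eq_mul, mul_comm]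

theorem integrable_densMeasure_iff (hDm : Measurable D) (hD0 : ∀ ω, 0 ≤ D ω) {f : Ω → ℝ} :
    Integrable f (densMeasure μ D) ↔ Integrable (f * D) μ := by
  rw [densMeasure, integrable_withDensity_iff hDm.ennreal_ofReal
    (ae_of_all _ fun _ => ENNReal.ofReal_lt_top)]
  simp only [ENNReal.toReal_ofReal (hD0 _)]
  rfl

theorem densMeasure_condExp_ae_eq_iff [IsFiniteMeasure μ] (hm : m ≤ m0) (hDm : Measurable D)
    (hD : Integrable D μ) (hD0 : ∀ ω, 0 ≤ D ω) {X Y : Ω → ℝ}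
    (hX : Integrable X (densMeasure μ D)) (hY : Integrable Y (densMeasure μ D))
    (hYm : StronglyMeasurable[m] Y) :
    (densMeasure μ D)[X|m] =ᵐ[densMeasure μ D] Y ↔ μ[X * D|m] =ᵐ[μ] μ[Y * D|m] := by
  have : IsFiniteMeasure (densMeasure μ D) := isFiniteMeasure_withDensity_ofReal hD.2
  have hYD := (integrable_densMeasure_iff hDm hD0).1 hY
  rw [condExp_ae_eq_iff_forall_setIntegral_eq hm hX hY hYm,
    condExp_ae_eq_iff_forall_setIntegral_eq hm ((integrable_densMeasure_iff hDm hD0).1 hX)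
      integrable_condExp stronglyMeasurable_condExp]
  refine forall₂_congr fun s hs => ?_
  rw [setIntegral_densMeasure hDm hD0 _ (hm s hs), setIntegral_densMeasure hDm hD0 _ (hm s hs),
    setIntegral_condExp hm hYD hs]
  rfl

end densMeasure

section ForwardMeasure

variable {ι : Type*} [Preorder ι]

noncomputable def forwardMeasure (μ : Measure Ω) (Z : ι → Ω → ℝ) (i T : ι) : Measure Ω :=
  densMeasure μ (Z T / Z i)

variable {𝔾 : Filtration ι m0} [IsFiniteMeasure μ] [NeZero μ] {Z X : ι → Ω → ℝ} {i s t T : ι}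

theorem integrable_forwardDensity (hZ : Adapted 𝔾 Z) (hZpos : ∀ r ω, 0 < Z r ω) (hiT : i ≤ T)
    (hZmart : ∀ r, i ≤ r → r ≤ T → μ[Z T|𝔾 r] =ᵐ[μ] Z r) : Integrable (Z T / Z i) μ :=
  integrable_div_of_condExp_ae_eq (𝔾.le i)
    (integrable_of_condExp_ae_eq_pos (hZmart i le_rfl hiT) (hZpos i))
    (fun ω => (hZpos T ω).le) (hZ i) (hZpos i) (hZmart i le_rfl hiT)

theorem condExp_forwardDensity (hZ : Adapted 𝔾 Z) (hZpos : ∀ r ω, 0 < Z r ω)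
    (hZmart : ∀ r, i ≤ r → r ≤ T → μ[Z T|𝔾 r] =ᵐ[μ] Z r) {r : ι} (hir : i ≤ r) (hrT : r ≤ T) :
    μ[Z T / Z i|𝔾 r] =ᵐ[μ] Z r / Z i :=
  (condExp_div_of_measurable (hZ.measurable_le hir)
      (integrable_of_condExp_ae_eq_pos (hZmart r hir hrT) (hZpos r))
      (integrable_forwardDensity hZ hZpos (hir.trans hrT) hZmart)).trans
    ((hZmart r hir hrT).div EventuallyEq.rfl)

theorem forwardMeasure_condExp_ae_eq_iff (hZ : Adapted 𝔾 Z) (hZpos : ∀ r ω, 0 < Z r ω)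
    (hZmart : ∀ r, i ≤ r → r ≤ T → μ[Z T|𝔾 r] =ᵐ[μ] Z r) (hX : Adapted 𝔾 X)
    (his : i ≤ s) (hst : s ≤ t) (htT : t ≤ T) (hXs : Integrable (X s) (forwardMeasure μ Z i T))
    (hXt : Integrable (X t) (forwardMeasure μ Z i T)) (hXZ : Integrable (X t * Z t) μ) :
    (forwardMeasure μ Z i T)[X t|𝔾 s] =ᵐ[forwardMeasure μ Z i T] X s ↔
      μ[X t * Z t|𝔾 s] =ᵐ[μ] X s * Z s := by
  have hD := integrable_forwardDensity hZ hZpos (his.trans (hst.trans htT)) hZmart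
  have hDm : Measurable (Z T / Z i) := hZ.measurable.div hZ.measurable
  have hD0 : ∀ ω, 0 ≤ (Z T / Z i) ω := fun ω => div_nonneg (hZpos T ω).le (hZpos i ω).le
  have hpull : ∀ r, i ≤ r → r ≤ T → Integrable (X r * (Z T / Z i)) μ →
      μ[X r * (Z T / Z i)|𝔾 r] =ᵐ[μ] X r * Z r / Z i := fun r hir hrT hXD =>
    (condExp_mul_of_stronglyMeasurable_left (hX r).stronglyMeasurable hXD hD).trans <|
      (EventuallyEq.rfl.mul (condExp_forwardDensity hZ hZpos hZmart hir hrT)).trans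
        (.of_eq (mul_div_assoc _ _ _).symm)
  have hpull_t := hpull t (his.trans hst) htT ((integrable_densMeasure_iff hDm hD0).1 hXt)
  have htower : μ[X t * (Z T / Z i)|𝔾 s] =ᵐ[μ] μ[X t * Z t|𝔾 s] / Z i :=
    (condExp_condExp_of_le (𝔾.mono hst) (𝔾.le t)).symm.trans <|
      (condExp_congr_ae hpull_t).trans <|
        condExp_div_of_measurable (hZ.measurable_le his) hXZ (integrable_condExp.congr hpull_t)
  rw [forwardMeasure, densMeasure_condExp_ae_eq_iff (𝔾.le s) hDm hD hD0 hXt hXs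
      (hX s).stronglyMeasurable, htower.congr_left,
    (hpull s his (hst.trans htT) ((integrable_densMeasure_iff hDm hD0).1 hXs)).congr_right]
  refine eventually_congr (.of_forall fun ω => ?_)
  simp only [Pi.div_apply, Pi.mul_apply]
  rw [div_left_inj' (hZpos i ω).ne']

end ForwardMeasure

end

theorem ccy_spread_bond_forward_martingale_iff_general
    {Ω : Type*} {m0 : MeasurableSpace Ω} (μ : Measure Ω) [IsProbabilityMeasure μ]
    (𝔾 : Filtration ℝ m0)
    (Bc Qacc Bc3 : ℝ → Ω → ℝ)
    (hBc3 : ∀ t ω, Bc3 t ω = Bc t ω * Qacc t ω)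
    (B Qb B3 : ℝ → ℝ → Ω → ℝ)
    (hB3 : ∀ t T ω, B3 t T ω = B t T ω * Qb t T ω)
    (hBcpos : ∀ t ω, 0 < Bc t ω)
    (hBpos : ∀ t T ω, 0 < B t T ω)
    (hadB : ∀ t T, StronglyMeasurable[𝔾 t] fun ω => B t T ω)
    (hadQb : ∀ t T, StronglyMeasurable[𝔾 t] fun ω => Qb t T ω)
    (hadBc : ∀ t, StronglyMeasurable[𝔾 t] (Bc t))
    (hadQ : ∀ t, StronglyMeasurable[𝔾 t] (Qacc t))
    (hint1 : ∀ t T, Integrable (fun ω => B3 t T ω / Bc3 t ω) μ)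
    (hint2 : ∀ T t, Integrable (fun ω => Qb t T ω / Qacc t ω)
        (densMeasure μ fun ω => Bc 0 ω * B T T ω / (Bc T ω * B 0 T ω)))
    -- risk neutrality of the k0-collateralized k0-ZCB bond-price model
    (hRN : ∀ T, 0 ≤ T → ∀ s t, 0 ≤ s → s ≤ t → t ≤ T →
      μ[fun ω => B t T ω / Bc t ω | 𝔾 s] =ᵐ[μ] fun ω => B s T ω / Bc s ω) :
    ((∀ T, 0 ≤ T → ∀ s t, 0 ≤ s → s ≤ t → t ≤ T →
        μ[fun ω => B3 t T ω / Bc3 t ω | 𝔾 s] =ᵐ[μ] fun ω => B3 s T ω / Bc3 s ω)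
      ↔
      (∀ T, 0 ≤ T → ∀ s t, 0 ≤ s → s ≤ t → t ≤ T →
        (densMeasure μ fun ω => Bc 0 ω * B T T ω / (Bc T ω * B 0 T ω))[fun ω =>
            Qb t T ω / Qacc t ω | 𝔾 s]
          =ᵐ[densMeasure μ fun ω => Bc 0 ω * B T T ω / (Bc T ω * B 0 T ω)]
            fun ω => Qb s T ω / Qacc s ω)) := by
  refine forall₂_congr fun T hT => forall₅_congr fun s t hs hst htT => ?_
  set Z : ℝ → Ω → ℝ := fun r ω => B r T ω / Bc r ω
  set X : ℝ → Ω → ℝ := fun r ω => Qb r T ω / Qacc r ω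
  have hY : ∀ r, (fun ω => B3 r T ω / Bc3 r ω) = X r * Z r := fun r => funext fun ω => by
    simp only [hB3, hBc3, Pi.mul_apply, X, Z]
    rw [mul_div_mul_comm, mul_comm]
  have hν : densMeasure μ (fun ω => Bc 0 ω * B T T ω / (Bc T ω * B 0 T ω))
      = forwardMeasure μ Z 0 T := by
    refine congrArg (densMeasure μ) (funext fun ω => ?_)
    simp only [Pi.div_apply, Z]
    rw [div_div_div_eq, mul_comm (B T T ω)]
  have hZ : Adapted 𝔾 Z := fun r => (hadB r T).measurable.div (hadBc r).measurable
  have hX : Adapted 𝔾 X := fun r => (hadQb r T).measurable.div (hadQ r).measurable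
  rw [hν, hY, hY]
  refine (forwardMeasure_condExp_ae_eq_iff hZ (fun r ω => div_pos (hBpos r T ω) (hBcpos r ω))
    (fun r hr hrT => hRN T hT r T hr hrT le_rfl) hX hs hst htT ?_ ?_ ?_).symm
  · exact hν ▸ hint2 T s
  · exact hν ▸ hint2 T t
  · exact hY t ▸ hint1 t T

/-- Suppose the bond-price model for currency `k0` is risk neutral, i.e.
`B^{k0,k0}(·,T)/B^{c,k0}` is a `(ℚ^{k0},𝔾)`-martingale for every `T` (`hRN`). Then, for
`k3 ≠ k0`, the processes `B^{k0,k3}(·,T)/B^{c,k0,k3}` are `(ℚ^{k0},𝔾)`-martingales for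
every `T` if and only if the processes `Q^{k0,k3}(·,T)/Q^{k0,k3}` are
`(ℚ^{T,k0,k0},𝔾)`-martingales for every `T`, where `ℚ^{T,k0,k0}` is the forward measure
with density `(B^{k0,k0}(T,T)/B^{c,k0}_T)·(B^{c,k0}_0/B^{k0,k0}(0,T))`. Here
`B^{c,k0,k3} = B^{c,k0} Q^{k0,k3}` and `B^{k0,k3}(t,T) = B^{k0,k0}(t,T) Q^{k0,k3}(t,T)`. -/
theorem ccy_spread_bond_forward_martingale_iff
    {Ω : Type*} {m0 : MeasurableSpace Ω} (μ : Measure Ω) [IsProbabilityMeasure μ]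
    (𝔾 : Filtration ℝ m0)
    (Bc Qacc Bc3 : ℝ → Ω → ℝ)
    (hBc3 : ∀ t ω, Bc3 t ω = Bc t ω * Qacc t ω)
    (B Qb B3 : ℝ → ℝ → Ω → ℝ)
    (hB3 : ∀ t T ω, B3 t T ω = B t T ω * Qb t T ω)
    (hBcpos : ∀ t ω, 0 < Bc t ω) (hQpos : ∀ t ω, 0 < Qacc t ω)
    (hBpos : ∀ t T ω, 0 < B t T ω) (hQbpos : ∀ t T ω, 0 < Qb t T ω)
    (hBTT : ∀ T ω, B T T ω = 1) (hBc0 : ∀ ω, Bc 0 ω = 1) (hQ0 : ∀ ω, Qacc 0 ω = 1)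
    (hadB : ∀ t T, StronglyMeasurable[𝔾 t] fun ω => B t T ω)
    (hadQb : ∀ t T, StronglyMeasurable[𝔾 t] fun ω => Qb t T ω)
    (hadBc : ∀ t, StronglyMeasurable[𝔾 t] (Bc t))
    (hadQ : ∀ t, StronglyMeasurable[𝔾 t] (Qacc t))
    (hint1 : ∀ t T, Integrable (fun ω => B3 t T ω / Bc3 t ω) μ)
    (hint2 : ∀ T t, Integrable (fun ω => Qb t T ω / Qacc t ω)
        (densMeasure μ fun ω => Bc 0 ω * B T T ω / (Bc T ω * B 0 T ω)))
    -- risk neutrality of the k0-collateralized k0-ZCB bond-price model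
    (hRN : ∀ T, 0 ≤ T → ∀ s t, 0 ≤ s → s ≤ t → t ≤ T →
      μ[fun ω => B t T ω / Bc t ω | 𝔾 s] =ᵐ[μ] fun ω => B s T ω / Bc s ω) :
    ((∀ T, 0 ≤ T → ∀ s t, 0 ≤ s → s ≤ t → t ≤ T →
        μ[fun ω => B3 t T ω / Bc3 t ω | 𝔾 s] =ᵐ[μ] fun ω => B3 s T ω / Bc3 s ω)
      ↔
      (∀ T, 0 ≤ T → ∀ s t, 0 ≤ s → s ≤ t → t ≤ T →
        (densMeasure μ fun ω => Bc 0 ω * B T T ω / (Bc T ω * B 0 T ω))[fun ω =>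
            Qb t T ω / Qacc t ω | 𝔾 s]
          =ᵐ[densMeasure μ fun ω => Bc 0 ω * B T T ω / (Bc T ω * B 0 T ω)]
            fun ω => Qb s T ω / Qacc s ω)) :=
  ccy_spread_bond_forward_martingale_iff_general μ 𝔾 Bc Qacc Bc3 hBc3 B Qb B3 hB3 hBcpos hBpos hadB
    hadQb hadBc hadQ hint1 hint2 hRN
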